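/- arXiv:1911.09303 — 7 statements merged into one kernel-verified Lean document; each statement's English description precedes it below -/
import Mathlib

section
/- (Splitting rule) Let v ∈ FΩ_k and w ∈ FΩ_ℓ be such that every subset in the support of v is disjoint from every subset in the support of w. Then (v·w)φ^{(t)} = Σ_{i=0}^t ((v)φ^{(i)}) · ((w)φ^{(t-i)}), where · denotes the bilinear product sending disjoint subsets u, v to u ∪ v and non-disjoint pairs to 0. -/
/-- The `a`-step boundary map `φ^{(a)}`. -/
noncomputable def phiStep (n : ℕ) (F : Type) [Field F] (a : ℕ) :
    (Finset (Fin n) →₀ F) →ₗ[F] (Finset (Fin n) →₀ F) :=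
  Finsupp.lsum F fun ω =>
    (LinearMap.id : F →ₗ[F] F).smulRight
      (if a ≤ ω.card then
        ∑ ω' ∈ ω.powersetCard (ω.card - a), Finsupp.single ω' (1 : F)
      else 0)

/-- The bilinear product on `⊕_k FΩ_k`: on basis subsets, `u·v = u ∪ v` if `u` and `v`
are disjoint, and `0` otherwise. -/
noncomputable def fmul (n : ℕ) (F : Type) [Field F] (x y : Finset (Fin n) →₀ F) :
    Finset (Fin n) →₀ F :=
  x.sum fun u c => y.sum fun v d =>
    if Disjoint u v then Finsupp.single (u ∪ v) (c * d) else 0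

/-!
Both sides are biadditive in `(v, w)`, so it suffices to take `v, w` to be disjoint basis
subsets `u, u'`. Subsets `σ ⊆ u ∪ u'` then correspond bijectively to pairs
`(σ ∩ u, σ ∩ u')`, and `σ` drops `t` elements of `u ∪ u'` exactly when `σ ∩ u` drops `i` elements
of `u` and `σ ∩ u'` drops `t - i` elements of `u'`, for a unique `i ≤ t`.
-/

open Finset

section PowersetUnion

variable {α M : Type*} [DecidableEq α] [AddCommMonoid M]

lemma Finset.sum_powerset_union_of_disjoint {s t : Finset α} (h : Disjoint s t)
    (f : Finset α → M) :
    ∑ σ ∈ (s ∪ t).powerset, f σ = ∑ a ∈ s.powerset, ∑ b ∈ t.powerset, f (a ∪ b) := by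
  have hinter : ∀ {a b : Finset α}, a ⊆ s → b ⊆ t → (a ∪ b) ∩ s = a ∧ (a ∪ b) ∩ t = b :=
    fun ha hb => by
      rw [union_inter_distrib_right, union_inter_distrib_right, inter_eq_left.2 ha,
        inter_eq_left.2 hb, disjoint_iff_inter_eq_empty.1 (h.symm.mono_left hb),
        disjoint_iff_inter_eq_empty.1 (h.mono_left ha), union_empty, empty_union]
      exact ⟨rfl, rfl⟩
  have hinj : Set.InjOn (fun p : Finset α × Finset α => p.1 ∪ p.2)
      (s.powerset ×ˢ t.powerset : Finset _) := by
    rintro ⟨a, b⟩ hab ⟨a', b'⟩ hab' heq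
    simp only [coe_product, Set.mem_prod, mem_coe, mem_powerset] at hab hab' heq
    obtain ⟨has, hbt⟩ := hinter hab.1 hab.2
    obtain ⟨has', hbt'⟩ := hinter hab'.1 hab'.2
    rw [Prod.mk.injEq]
    exact ⟨by rw [← has, heq, has'], by rw [← hbt, heq, hbt']⟩
  rw [show (s ∪ t).powerset = (s.powerset ×ˢ t.powerset).image fun p => p.1 ∪ p.2 by
    rw [powerset_union]; rfl, sum_image hinj, sum_product]

end PowersetUnion

variable {n : ℕ} {F : Type} [Field F]

lemma phiStep_single (a : ℕ) (ω : Finset (Fin n)) (c : F) :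
    phiStep n F a (Finsupp.single ω c)
      = ∑ ω' ∈ ω.powerset with ω'.card + a = ω.card, Finsupp.single ω' c := by
  rw [phiStep, Finsupp.lsum_single, LinearMap.smulRight_apply, LinearMap.id_apply]
  split_ifs with ha
  · rw [smul_sum, powersetCard_eq_filter]
    refine sum_congr (filter_congr fun ω' _ => by omega) fun ω' _ => ?_
    rw [Finsupp.smul_single, smul_eq_mul, mul_one]
  · rw [smul_zero, eq_comm]
    exact sum_eq_zero fun ω' hω' => absurd (mem_filter.1 hω').2 (by omega)

lemma fmul_single_single (u u' : Finset (Fin n)) (c d : F) :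
    fmul n F (Finsupp.single u c) (Finsupp.single u' d)
      = if Disjoint u u' then Finsupp.single (u ∪ u') (c * d) else 0 := by
  rw [fmul, Finsupp.sum_single_index, Finsupp.sum_single_index]
  · split <;> simp
  · rw [Finsupp.sum_single_index] <;> split <;> simp

lemma fmul_sum_left {ι : Type*} (s : Finset ι) (f : ι → (Finset (Fin n) →₀ F))
    (y : Finset (Fin n) →₀ F) :
    fmul n F (∑ i ∈ s, f i) y = ∑ i ∈ s, fmul n F (f i) y := by
  refine (Finsupp.sum_finsetSum_index (fun u => ?_) fun u c c' => ?_).symm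
  · exact sum_eq_zero fun v _ => by dsimp only; split_ifs <;> simp
  · rw [← Finsupp.sum_add]
    exact sum_congr rfl fun v _ => by dsimp only; split_ifs <;> simp [add_mul]

lemma fmul_sum_right {ι : Type*} (s : Finset ι) (x : Finset (Fin n) →₀ F)
    (f : ι → (Finset (Fin n) →₀ F)) :
    fmul n F x (∑ i ∈ s, f i) = ∑ i ∈ s, fmul n F x (f i) := by
  simp only [fmul]
  rw [← Finsupp.sum_finsetSum_comm]
  refine Finsupp.sum_congr fun u _ =>
    (Finsupp.sum_finsetSum_index (fun v => ?_) fun v d d' => ?_).symm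
  · split_ifs <;> simp
  · split_ifs <;> simp [mul_add]

lemma phiStep_fmul_single_single {u u' : Finset (Fin n)} (hd : Disjoint u u') (c d : F)
    (t : ℕ) :
    phiStep n F t (fmul n F (Finsupp.single u c) (Finsupp.single u' d))
      = ∑ i ∈ range (t + 1),
          fmul n F (phiStep n F i (Finsupp.single u c))
            (phiStep n F (t - i) (Finsupp.single u' d)) := by
  set x : Finset (Fin n) → Finset (Fin n) →₀ F := fun σ => Finsupp.single σ (c * d)
  -- a pair `(α, β)` arises from exactly one `i`, namely `i = |u| - |α|`
  have hsplit : ∀ α ∈ u.powerset, ∀ β ∈ u'.powerset,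
      (∑ i ∈ range (t + 1),
        if α.card + i = u.card ∧ β.card + (t - i) = u'.card then x (α ∪ β) else 0)
        = if (α ∪ β).card + t = (u ∪ u').card then x (α ∪ β) else 0 := by
    intro α hα β hβ
    have hαu := card_le_card (mem_powerset.1 hα)
    have hβu' := card_le_card (mem_powerset.1 hβ)
    rw [card_union_of_disjoint hd,
      card_union_of_disjoint (hd.mono (mem_powerset.1 hα) (mem_powerset.1 hβ))]
    split_ifs with hcard
    · rw [sum_eq_single_of_mem (u.card - α.card) (mem_range.2 (by omega))
        fun i _ hi => if_neg (by omega)]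
      exact if_pos (by omega)
    · exact sum_eq_zero fun i hi => if_neg (by have := mem_range.1 hi; omega)
  calc phiStep n F t (fmul n F (Finsupp.single u c) (Finsupp.single u' d))
      = ∑ σ ∈ (u ∪ u').powerset, if σ.card + t = (u ∪ u').card then x σ else 0 := by
        rw [fmul_single_single, if_pos hd, phiStep_single, sum_filter]
    _ = ∑ α ∈ u.powerset, ∑ β ∈ u'.powerset, ∑ i ∈ range (t + 1),
          if α.card + i = u.card ∧ β.card + (t - i) = u'.card then x (α ∪ β) else 0 := by
        rw [sum_powerset_union_of_disjoint hd]
        exact sum_congr rfl fun α hα => sum_congr rfl fun β hβ => (hsplit α hα β hβ).symm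
    _ = ∑ i ∈ range (t + 1), ∑ α ∈ u.powerset with α.card + i = u.card,
          ∑ β ∈ u'.powerset with β.card + (t - i) = u'.card, x (α ∪ β) := by
        simp only [sum_filter, ite_sum_zero, ite_and]
        exact (sum_congr rfl fun _ _ => Finset.sum_comm).trans Finset.sum_comm
    _ = _ := by
        refine sum_congr rfl fun i _ => ?_
        rw [phiStep_single, phiStep_single, fmul_sum_left]
        refine sum_congr rfl fun α hα => ?_
        rw [fmul_sum_right]
        refine sum_congr rfl fun β hβ => ?_
        rw [fmul_single_single, if_pos (hd.mono (mem_powerset.1 (mem_filter.1 hα).1)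
          (mem_powerset.1 (mem_filter.1 hβ).1))]

theorem splitting_rule_general (n : ℕ) (F : Type) [Field F] (t : ℕ)
    (v w : Finset (Fin n) →₀ F)
    (hdisj : ∀ u ∈ v.support, ∀ u' ∈ w.support, Disjoint u u') :
    phiStep n F t (fmul n F v w)
      = ∑ i ∈ Finset.range (t + 1), fmul n F (phiStep n F i v) (phiStep n F (t - i) w) := by
  rw [← Finsupp.sum_single v, ← Finsupp.sum_single w]
  simp only [Finsupp.sum, map_sum, fmul_sum_left]
  simp only [fmul_sum_right, map_sum]
  rw [sum_congr rfl fun u hu => sum_congr rfl fun u' hu' =>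
    phiStep_fmul_single_single (hdisj u hu u' hu') _ _ t]
  exact (sum_congr rfl fun _ _ => Finset.sum_comm).trans Finset.sum_comm

/-- Splitting rule: if every subset in the support of `v ∈ FΩ_k` is
disjoint from every subset in the support of `w ∈ FΩ_ℓ`, then
`(v·w)φ^{(t)} = Σ_{i=0}^t ((v)φ^{(i)}) · ((w)φ^{(t-i)})`. -/
theorem splitting_rule (n : ℕ) (F : Type) [Field F] (k l t : ℕ)
    (v w : Finset (Fin n) →₀ F)
    (hv : ∀ u ∈ v.support, u.card = k) (hw : ∀ u ∈ w.support, u.card = l)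
    (hdisj : ∀ u ∈ v.support, ∀ u' ∈ w.support, Disjoint u u') :
    phiStep n F t (fmul n F v w)
      = ∑ i ∈ Finset.range (t + 1), fmul n F (phiStep n F i v) (phiStep n F (t - i) w) :=
  splitting_rule_general n F t v w hdisj
end

section
/- Let C_• = (C_k, ∂_k) be a p-complex of modules (∂^p = 0). For any a ∈ {0,...,p-2}, the map ∂^a induces an injective module homomorphism from the slash homology group H_k^{/a} = Ker(∂^{a+1})/(Im(∂^{p-a-1}) + Ker(∂^a)) to H_{k-a}^{/0} = Ker(∂)/Im(∂^{p-1}). -/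
/-- Slash shifting: for a `p`-complex (here modelled by a module
endomorphism `f` with `f^p = 0`), `∂^a` induces an injective map
`H^{/a} = Ker(∂^{a+1})/(Im(∂^{p-a-1}) + Ker(∂^a)) → H^{/0} = Ker(∂)/Im(∂^{p-1})`:
if `x ∈ Ker(f^{a+1})` and `f^a x ∈ Im(f^{p-1})`, then
`x ∈ Im(f^{p-a-1}) + Ker(f^a)`. -/
theorem slash_shifting (R : Type) (M : Type) [CommRing R] [AddCommGroup M] [Module R M]
    (p : ℕ) (hp : p.Prime) (f : M →ₗ[R] M) (hf : f ^ p = 0)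
    (a : ℕ) (ha : a ≤ p - 2) :
    ∀ x : M, (f ^ (a + 1)) x = 0 → (f ^ a) x ∈ LinearMap.range (f ^ (p - 1)) →
      x ∈ LinearMap.range (f ^ (p - a - 1)) ⊔ LinearMap.ker (f ^ a) := by
  intro x _ hx
  obtain ⟨y, hy⟩ := hx
  have h2 : 2 ≤ p := hp.two_le
  have hsum : a + (p - a - 1) = p - 1 := by omega
  rw [Submodule.mem_sup]
  refine ⟨(f ^ (p - a - 1)) y, ⟨y, rfl⟩, x - (f ^ (p - a - 1)) y, ?_, by abel⟩
  simp only [LinearMap.mem_ker, map_sub]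
  rw [← LinearMap.comp_apply, ← Module.End.mul_eq_comp, ← pow_add, hsum, hy, sub_self]
end

section
/- Let C_• = (C_k, ∂_k) be a p-complex of modules and let b < p. If the (p-1)-st p-homology group ^{p-1}H_{k-i} := Ker(∂^{p-1}_{k-i})/Im(∂_{k-i+1}) vanishes for all i ∈ {1,...,b}, then ^{p-r}H_{k-r} := Ker(∂^{p-r}_{k-r})/Im(∂^r_k) vanishes for all r ∈ {1,...,b}. -/
/-- Let `C_•` be a `p`-complex, modelled by a module `M` with a family of
graded pieces `G : ℤ → Submodule R M` and an endomorphism `f` of degree `-1` with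
`f^p = 0`. If the `(p-1)`-st `p`-homology `^{p-1}H_{k-i} = Ker(∂^{p-1})/Im(∂)`
vanishes for all `i ∈ {1,...,b}` with `b < p`, then `^{p-r}H_{k-r} = Ker(∂^{p-r})/Im(∂^r)`
vanishes for all `r ∈ {1,...,b}`. -/
theorem pHomology_vanishing (R : Type) (M : Type) [CommRing R] [AddCommGroup M] [Module R M]
    (p : ℕ) (hp : p.Prime) (G : ℤ → Submodule R M) (f : M →ₗ[R] M)
    (hgrade : ∀ k : ℤ, ∀ x ∈ G k, f x ∈ G (k - 1))
    (hfp : f ^ p = 0)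
    (k : ℤ) (b : ℕ) (hb : b < p)
    (hyp : ∀ i : ℕ, 1 ≤ i → i ≤ b → ∀ x ∈ G (k - i), (f ^ (p - 1)) x = 0 →
      ∃ y ∈ G (k - i + 1), f y = x) :
    ∀ r : ℕ, 1 ≤ r → r ≤ b → ∀ x ∈ G (k - r), (f ^ (p - r)) x = 0 →
      ∃ y ∈ G k, (f ^ r) y = x := by
  intro r
  induction r with
  | zero => intro h; omega
  | succ n ih =>
    intro _ hrb x hx hfx
    have hle : n + 1 ≤ b := hrb
    have hpn : n + 1 < p := lt_of_le_of_lt hle hb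
    have hf1 : (f ^ (p - 1)) x = 0 := by
      have h : p - 1 = n + (p - (n + 1)) := by omega
      rw [h, pow_add, Module.End.mul_apply, hfx, map_zero]
    obtain ⟨y, hy, hfy⟩ := hyp (n + 1) (by omega) hle x hx hf1
    rcases Nat.eq_zero_or_pos n with hn | hn
    · subst hn
      refine ⟨y, ?_, ?_⟩
      · convert hy using 2; push_cast; ring
      · simpa using hfy
    · have hy' : y ∈ G (k - n) := by
        convert hy using 2; push_cast; ring
      have hfyn : (f ^ (p - n)) y = 0 := by
        have h : p - n = (p - (n + 1)) + 1 := by omega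
        rw [h, pow_add, Module.End.mul_apply, pow_one, hfy, hfx]
      obtain ⟨z, hz, hfz⟩ := ih hn (by omega) y hy' hfyn
      exact ⟨z, hz, by rw [pow_succ', Module.End.mul_apply, hfz, hfy]⟩
end

section
/- Let ω be a k-subset of {1,...,n}, m = ⌊n/2⌋ + 1, and let h = max({0} ∪ {i ∈ {1,...,m} : |ω ∩ {1,...,2i-1}| = i}) be the threshold of ω. Suppose h ≤ m-1. If 2k ≤ n, then |ω ∩ {1,...,2i-1}| < i for all h < i ≤ m; if 2k > n, then |ω ∩ {1,...,2i-1}| > i for all h < i ≤ m. -/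
/-- The density `d^ω_i = |ω ∩ {1,...,2i-1}|`. -/
def dens (ω : Finset ℕ) (i : ℕ) : ℕ := (ω ∩ Finset.Icc 1 (2 * i - 1)).card

/-- The threshold of `ω`: `max({0} ∪ {i ∈ {1,...,m} : d^ω_i = i})` where `m = ⌊n/2⌋+1`. -/
def threshold (n : ℕ) (ω : Finset ℕ) : ℕ :=
  ((Finset.Icc 1 (n / 2 + 1)).filter fun i => dens ω i = i).sup id

lemma dens_mono (ω : Finset ℕ) (i : ℕ) : dens ω i ≤ dens ω (i + 1) := by
  apply Finset.card_le_card
  apply Finset.inter_subset_inter_left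
  apply Finset.Icc_subset_Icc_right
  omega

lemma dens_step (ω : Finset ℕ) (i : ℕ) (hi : 1 ≤ i) :
    dens ω (i + 1) ≤ dens ω i + 2 := by
  have hsub : ω ∩ Finset.Icc 1 (2 * (i + 1) - 1) ⊆
      (ω ∩ Finset.Icc 1 (2 * i - 1)) ∪ {2 * i, 2 * i + 1} := by
    intro x hx
    simp only [Finset.mem_inter, Finset.mem_Icc] at hx
    simp only [Finset.mem_union, Finset.mem_inter, Finset.mem_Icc, Finset.mem_insert,
      Finset.mem_singleton]
    obtain ⟨hxω, hx1, hx2⟩ := hx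
    rcases lt_or_ge x (2 * i) with h | h
    · exact Or.inl ⟨hxω, hx1, by omega⟩
    · exact Or.inr (by omega)
  calc dens ω (i + 1) ≤ ((ω ∩ Finset.Icc 1 (2 * i - 1)) ∪ {2 * i, 2 * i + 1}).card :=
        Finset.card_le_card hsub
    _ ≤ dens ω i + ({2 * i, 2 * i + 1} : Finset ℕ).card := Finset.card_union_le _ _
    _ ≤ dens ω i + 2 := by
        have : ({2 * i, 2 * i + 1} : Finset ℕ).card ≤ 2 :=
          Finset.card_insert_le _ _ |>.trans (by simp)
        omega

lemma dens_ne (n : ℕ) (ω : Finset ℕ) (i : ℕ) (h1 : 1 ≤ i) (h2 : i ≤ n / 2 + 1)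
    (h3 : threshold n ω < i) : dens ω i ≠ i := by
  intro heq
  have : i ≤ threshold n ω := by
    apply Finset.le_sup (f := id)
    simp [Finset.mem_filter, Finset.mem_Icc, h1, h2, heq]
  omega

lemma dens_top (n k : ℕ) (ω : Finset ℕ) (hω : ω ⊆ Finset.Icc 1 n) (hcard : ω.card = k) :
    dens ω (n / 2 + 1) = k := by
  rw [← hcard]
  unfold dens
  congr 1
  rw [Finset.inter_eq_left]
  intro x hx
  have := hω hx
  simp only [Finset.mem_Icc] at this ⊢
  omega

/-- if the threshold `h` of a `k`-subset `ω` of `{1,...,n}` satisfies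
`h ≤ m - 1`, then: if `2k ≤ n` then `d^ω_i < i` for all `h < i ≤ m`;
if `2k > n` then `d^ω_i > i` for all `h < i ≤ m`. -/
theorem density_beyond_threshold (n k : ℕ) (ω : Finset ℕ)
    (hω : ω ⊆ Finset.Icc 1 n) (hcard : ω.card = k)
    (hh : threshold n ω ≤ n / 2 + 1 - 1) :
    (2 * k ≤ n → ∀ i, threshold n ω < i → i ≤ n / 2 + 1 → dens ω i < i) ∧
    (n < 2 * k → ∀ i, threshold n ω < i → i ≤ n / 2 + 1 → i < dens ω i) := by
  set m := n / 2 + 1 with hm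
  have htop := dens_top n k ω hω hcard
  rw [← hm] at htop
  constructor
  · intro hk i hi him
    have hbase : dens ω m < m := by omega
    -- downward induction on m - i
    have key : ∀ d i, m - i = d → threshold n ω < i → i ≤ m → dens ω i < i := by
      intro d
      induction d with
      | zero => intro i hd h1 h2
                have : i = m := by omega
                subst this; exact hbase
      | succ d ih =>
        intro i hd h1 h2
        have hnext : dens ω (i + 1) < i + 1 := ih (i + 1) (by omega) (by omega) (by omega)
        have hmono := dens_mono ω i
        have hne := dens_ne n ω i (by omega) h2 h1
        omega
    exact key (m - i) i rfl hi him
  · intro hk i hi him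
    have hbase : m < dens ω m := by
      rcases lt_trichotomy (dens ω m) m with h | h | h
      · omega
      · exfalso
        exact dens_ne n ω m (by omega) (by omega) (by omega) h
      · exact h
    have key : ∀ d i, m - i = d → threshold n ω < i → i ≤ m → i < dens ω i := by
      intro d
      induction d with
      | zero => intro i hd h1 h2
                have : i = m := by omega
                subst this; exact hbase
      | succ d ih =>
        intro i hd h1 h2
        have hnext : i + 1 < dens ω (i + 1) := ih (i + 1) (by omega) (by omega) (by omega)
        have hstep := dens_step ω i (by omega)
        have hne := dens_ne n ω i (by omega) h2 h1
        omega
    exact key (m - i) i rfl hi him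
end

section
/- Let ω be a k-subset of {1,...,n} with 2k > n. Then the threshold of ω is nonzero, i.e. there exists i ∈ {1,...,m} (with m = ⌊n/2⌋+1) such that |ω ∩ {1,...,2i-1}| = i. Moreover, such an i can be found with i ≤ n-k+1. -/
lemma dens_succ_le (ω : Finset ℕ) (i : ℕ) : dens ω (i + 1) ≤ dens ω i + 2 := by
  have hsub : ω ∩ Finset.Icc 1 (2 * (i + 1) - 1) ⊆
      (ω ∩ Finset.Icc 1 (2 * i - 1)) ∪ {2 * i, 2 * i + 1} := by
    intro x hx
    obtain ⟨hxω, hx1, hx2⟩ := by simpa only [Finset.mem_inter, Finset.mem_Icc] using hx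
    by_cases h : x ≤ 2 * i - 1
    · exact Finset.mem_union_left _ (by simp only [Finset.mem_inter, Finset.mem_Icc]; exact ⟨hxω, hx1, h⟩)
    · refine Finset.mem_union_right _ ?_
      simp only [Finset.mem_insert, Finset.mem_singleton]
      omega
  calc dens ω (i + 1) ≤ ((ω ∩ Finset.Icc 1 (2 * i - 1)) ∪ {2 * i, 2 * i + 1}).card :=
        Finset.card_le_card hsub
    _ ≤ (ω ∩ Finset.Icc 1 (2 * i - 1)).card + ({2 * i, 2 * i + 1} : Finset ℕ).card :=
        Finset.card_union_le _ _
    _ ≤ dens ω i + 2 := by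
        have : ({2 * i, 2 * i + 1} : Finset ℕ).card ≤ 2 := Finset.card_insert_le _ _ |>.trans (by simp)
        unfold dens; omega

/-- if `ω` is a `k`-subset of `{1,...,n}` with `2k > n`, then there is
some `i ∈ {1,...,m}` (where `m = ⌊n/2⌋+1`) with `d^ω_i = i`, i.e. the threshold of
`ω` is nonzero; moreover such an `i` can be found with `i ≤ n - k + 1`. -/
theorem threshold_pos_of_high (n k : ℕ) (ω : Finset ℕ)
    (hω : ω ⊆ Finset.Icc 1 n) (hcard : ω.card = k) (h2k : n < 2 * k) :
    ∃ i, 1 ≤ i ∧ i ≤ n - k + 1 ∧ i ≤ n / 2 + 1 ∧ dens ω i = i := by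
  -- The key: dens ω (n-k+1) ≥ n-k+1.
  have hkey : n - k + 1 ≤ dens ω (n - k + 1) := by
    have hsub : ω ⊆ (ω ∩ Finset.Icc 1 (2 * (n - k + 1) - 1)) ∪
        Finset.Icc (2 * (n - k) + 2) n := by
      intro x hx
      obtain ⟨hx1, hx2⟩ := by simpa only [Finset.mem_Icc] using hω hx
      by_cases h : x ≤ 2 * (n - k + 1) - 1
      · exact Finset.mem_union_left _ (by simp only [Finset.mem_inter, Finset.mem_Icc]; exact ⟨hx, hx1, h⟩)
      · refine Finset.mem_union_right _ ?_
        simp only [Finset.mem_Icc]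
        omega
    have h1 : ω.card ≤ (ω ∩ Finset.Icc 1 (2 * (n - k + 1) - 1)).card +
        (Finset.Icc (2 * (n - k) + 2) n).card :=
      (Finset.card_le_card hsub).trans (Finset.card_union_le _ _)
    rw [Nat.card_Icc] at h1
    unfold dens
    omega
  have hQ : ∃ j, j + 1 ≤ dens ω (j + 1) := ⟨n - k, hkey⟩
  classical
  set j := Nat.find hQ with hj
  have hQj : j + 1 ≤ dens ω (j + 1) := Nat.find_spec hQ
  have hjle : j ≤ n - k := Nat.find_min' hQ hkey
  refine ⟨j + 1, by omega, by omega, by omega, ?_⟩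
  rcases Nat.eq_zero_or_pos j with h0 | hpos
  · -- dens ω 1 ≤ 1
    have : dens ω 1 ≤ 1 := by
      have : ω ∩ Finset.Icc 1 (2 * 1 - 1) ⊆ {1} := by
        intro x hx
        simp only [Finset.mem_inter, Finset.mem_Icc] at hx
        simp only [Finset.mem_singleton]
        omega
      have := Finset.card_le_card this
      simpa [dens] using this
    rw [h0] at hQj ⊢
    norm_num at hQj ⊢
    omega
  · have hmin : ¬ ((j - 1) + 1 ≤ dens ω ((j - 1) + 1)) := Nat.find_min hQ (by omega)
    have hstep : dens ω (j + 1) ≤ dens ω j + 2 := dens_succ_le ω j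
    have : (j - 1) + 1 = j := by omega
    rw [this] at hmin
    omega
end

section
/- Let p be an odd prime and n, k integers with n − (p−1) < 2k ≤ n. Then Σ_{j ∈ ℤ} [C(n, pj + k) − C(n, pj + k − 1)] > 0, i.e. this alternating sum of binomial coefficients along an arithmetic progression mod p is strictly positive. (It equals the number of lattice paths from (0,0) to (n−k,k) staying strictly between the lines y = x + 1 and y = x − (p−1).) -/
/-- `C(n, r)` for `r : ℤ`, equal to `0` outside `{0,...,n}`. -/
def binZ (n : ℕ) (r : ℤ) : ℤ := if 0 ≤ r then (n.choose r.toNat : ℤ) else 0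

lemma binZ_neg {n : ℕ} {r : ℤ} (h : r < 0) : binZ n r = 0 := by
  simp [binZ, not_le.2 h]

lemma binZ_gt {n : ℕ} {r : ℤ} (h : (n : ℤ) < r) : binZ n r = 0 := by
  have h0 : 0 ≤ r := le_of_lt (lt_of_le_of_lt (Int.ofNat_nonneg n) h)
  simp only [binZ, if_pos h0]
  norm_cast
  exact Nat.choose_eq_zero_of_lt (Int.lt_toNat.mpr h)

def Abin (p n : ℕ) (m : ℤ) : ℤ :=
  ∑ r ∈ Finset.range (n+1), if (p:ℤ) ∣ (r:ℤ) - m then (n.choose r : ℤ) else 0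

lemma Abin_zero (p : ℕ) (m : ℤ) : Abin p 0 m = if (p:ℤ) ∣ m then 1 else 0 := by
  simp [Abin, Finset.sum_range_one, zero_sub, Int.dvd_neg]

lemma Abin_shift (p n : ℕ) (m : ℤ) : Abin p n (m + p) = Abin p n m := by
  unfold Abin
  refine Finset.sum_congr rfl fun r _ => ?_
  congr 1
  rw [eq_iff_iff]
  constructor
  · intro h
    have h2 : (p:ℤ) ∣ (r - (m+p)) + p := dvd_add h dvd_rfl
    rwa [show (r:ℤ)-(m+p)+p = r-m by ring] at h2
  · intro h
    have h2 : (p:ℤ) ∣ (r - m) - p := dvd_sub h dvd_rfl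
    rwa [show (r:ℤ)-m-p = r-(m+p) by ring] at h2

lemma Abin_symm (p n : ℕ) (m : ℤ) : Abin p n ((n:ℤ) - m) = Abin p n m := by
  unfold Abin
  rw [← Finset.sum_range_reflect]
  refine Finset.sum_congr rfl fun r hr => ?_
  rw [Finset.mem_range] at hr
  have hrn : r ≤ n := by omega
  have hc : (n + 1 - 1 - r : ℕ) = n - r := by omega
  rw [hc]
  have hcast : ((n - r : ℕ) : ℤ) = (n:ℤ) - r := by omega
  rw [hcast, Nat.choose_symm hrn]
  congr 1
  rw [eq_iff_iff]
  constructor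
  · intro h
    have h2 : (p:ℤ) ∣ -((n:ℤ) - r - ((n:ℤ) - m)) := dvd_neg.mpr h
    rwa [show -((n:ℤ) - r - ((n:ℤ) - m)) = r - m by ring] at h2
  · intro h
    have h2 : (p:ℤ) ∣ -((r:ℤ) - m) := dvd_neg.mpr h
    rwa [show -((r:ℤ) - m) = (n:ℤ) - r - ((n:ℤ) - m) by ring] at h2

lemma Abin_pascal (p n : ℕ) (m : ℤ) : Abin p (n+1) m = Abin p n m + Abin p n (m-1) := by
  unfold Abin
  rw [Finset.sum_range_succ' (fun r => if (p:ℤ) ∣ (r:ℤ) - m then ((n+1).choose r : ℤ) else 0) (n+1)]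
  have key : ∀ r : ℕ, ((n+1).choose (r+1) : ℤ) = (n.choose r : ℤ) + (n.choose (r+1) : ℤ) := by
    intro r; exact_mod_cast Nat.choose_succ_succ n r
  simp only [key]
  have split : ∀ r : ℕ,
      (if (p:ℤ) ∣ ((r:ℤ)+1) - m then ((n.choose r : ℤ) + (n.choose (r+1) : ℤ)) else 0)
      = (if (p:ℤ) ∣ ((r:ℤ)+1) - m then (n.choose r : ℤ) else 0)
        + (if (p:ℤ) ∣ ((r:ℤ)+1) - m then (n.choose (r+1) : ℤ) else 0) := by
    intro r; split <;> simp
  push_cast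
  simp only [split]
  rw [Finset.sum_add_distrib]
  have e1 : ∑ r ∈ Finset.range (n+1), (if (p:ℤ) ∣ ((r:ℤ)+1) - m then (n.choose r : ℤ) else 0)
      = ∑ r ∈ Finset.range (n+1), (if (p:ℤ) ∣ (r:ℤ) - (m-1) then (n.choose r : ℤ) else 0) := by
    refine Finset.sum_congr rfl fun r _ => ?_
    congr 1
    rw [eq_iff_iff, show ((r:ℤ)+1) - m = (r:ℤ) - (m-1) by ring]
  have e2 : ∑ r ∈ Finset.range (n+1), (if (p:ℤ) ∣ ((r:ℤ)+1) - m then (n.choose (r+1) : ℤ) else 0)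
        + (if (p:ℤ) ∣ (0:ℤ) - m then ((n.choose 0 : ℤ)) else 0)
      = ∑ r ∈ Finset.range (n+1), (if (p:ℤ) ∣ (r:ℤ) - m then (n.choose r : ℤ) else 0) := by
    rw [Finset.sum_range_succ]
    rw [Nat.choose_eq_zero_of_lt (by omega : n < n+1)]
    rw [Finset.sum_range_succ' (fun r => if (p:ℤ) ∣ (r:ℤ) - m then (n.choose r : ℤ) else 0) n]
    push_cast
    simp
  rw [e1]
  rw [← e2]
  simp only [Nat.choose_zero_right, zero_sub, Nat.cast_one]
  ring

lemma sum_binZ_eq (p n : ℕ) (hp : 0 < p) (m : ℤ) (s : Finset ℤ)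
    (hs : ∀ j : ℤ, 0 ≤ (p:ℤ)*j+m → (p:ℤ)*j+m ≤ n → j ∈ s) :
    ∑ j ∈ s, binZ n ((p:ℤ)*j+m) = Abin p n m := by
  have hfil : ∑ j ∈ s.filter (fun j => 0 ≤ (p:ℤ)*j+m ∧ (p:ℤ)*j+m ≤ n), binZ n ((p:ℤ)*j+m)
      = ∑ j ∈ s, binZ n ((p:ℤ)*j+m) := by
    apply Finset.sum_filter_of_ne
    intro j _ hne
    by_contra hc
    push_neg at hc
    rcases le_or_gt 0 ((p:ℤ)*j+m) with h0 | h0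
    · exact hne (binZ_gt (hc h0))
    · exact hne (binZ_neg h0)
  rw [← hfil]
  have hA : Abin p n m
      = ∑ r ∈ (Finset.range (n+1)).filter (fun r : ℕ => (p:ℤ) ∣ (r:ℤ) - m), (n.choose r : ℤ) := by
    rw [Finset.sum_filter]; rfl
  rw [hA]
  apply Finset.sum_nbij' (i := fun j => ((p:ℤ)*j+m).toNat) (j := fun r => ((r:ℤ) - m) / p)
  · intro j hj
    simp only [Finset.mem_filter, Finset.mem_range] at hj ⊢
    obtain ⟨_, h0, h1⟩ := hj
    constructor
    · omega
    · have : (((p:ℤ)*j+m).toNat : ℤ) = (p:ℤ)*j+m := Int.toNat_of_nonneg h0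
      rw [show ((((p:ℤ)*j+m).toNat : ℕ) : ℤ) - m = (p:ℤ)*j + m - m by rw [this]]
      exact ⟨j, by ring⟩
  · intro r hr
    simp only [Finset.mem_filter, Finset.mem_range] at hr
    obtain ⟨hr1, hd⟩ := hr
    have he : (p:ℤ) * (((r:ℤ) - m) / p) + m = r := by
      rw [Int.mul_ediv_cancel' hd]; ring
    have hb1 : (0:ℤ) ≤ (p:ℤ) * (((r:ℤ) - m) / p) + m := by rw [he]; positivity
    have hb2 : (p:ℤ) * (((r:ℤ) - m) / p) + m ≤ n := by
      rw [he]; exact_mod_cast Nat.lt_succ_iff.mp hr1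
    exact Finset.mem_filter.mpr ⟨hs _ hb1 hb2, hb1, hb2⟩
  · intro j hj
    simp only [Finset.mem_filter] at hj
    obtain ⟨_, h0, h1⟩ := hj
    rw [Int.toNat_of_nonneg h0]
    rw [show (p:ℤ)*j + m - m = (p:ℤ)*j by ring]
    exact Int.mul_ediv_cancel_left j (by exact_mod_cast hp.ne')
  · intro r hr
    simp only [Finset.mem_filter, Finset.mem_range] at hr
    obtain ⟨hr1, hd⟩ := hr
    have he : (p:ℤ) * (((r:ℤ) - m) / p) + m = r := by
      rw [Int.mul_ediv_cancel' hd]; ring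
    rw [he]; exact Int.toNat_natCast r
  · intro j hj
    simp only [Finset.mem_filter] at hj
    obtain ⟨_, h0, h1⟩ := hj
    simp only [binZ, if_pos h0]

def Sbin (p n : ℕ) (m : ℤ) : ℤ := Abin p n m - Abin p n (m - 1)

lemma Sbin_pascal (p n : ℕ) (m : ℤ) : Sbin p (n+1) m = Sbin p n m + Sbin p n (m-1) := by
  unfold Sbin
  rw [Abin_pascal, Abin_pascal]
  ring

lemma Sbin_top (p n : ℕ) (m : ℤ) (h : 2*m = (n:ℤ)+1) : Sbin p n m = 0 := by
  unfold Sbin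
  have e : m - 1 = (n:ℤ) - m := by linarith
  rw [e, Abin_symm, sub_self]

lemma Sbin_bot (p n : ℕ) (m : ℤ) (h : 2*m = (n:ℤ)+1-p) : Sbin p n m = 0 := by
  unfold Sbin
  have e : m - 1 = (n:ℤ) - (m + p) := by linarith
  rw [e, Abin_symm, Abin_shift, sub_self]

lemma no_dvd_small (p : ℕ) (x : ℤ) (h1 : -(p:ℤ) < x) (h2 : x < 0) : ¬ (p:ℤ) ∣ x := by
  intro ⟨c, hc⟩
  subst hc
  rcases le_or_gt c (-1) with h | h
  · have : (p:ℤ) * c ≤ (p:ℤ) * (-1) := by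
      apply mul_le_mul_of_nonneg_left h (by positivity)
    simp at this
    omega
  · have hc0 : 0 ≤ c := by omega
    have : 0 ≤ (p:ℤ) * c := mul_nonneg (by positivity) hc0
    omega

lemma Sbin_nonneg (p : ℕ) (hp : 2 ≤ p) :
    ∀ n : ℕ, ∀ m : ℤ, (n:ℤ)+1-p ≤ 2*m → 2*m ≤ (n:ℤ)+1 → 0 ≤ Sbin p n m := by
  intro n
  induction n with
  | zero =>
    intro m h1 h2
    simp only [Nat.cast_zero] at h1 h2
    unfold Sbin
    rw [Abin_zero, Abin_zero]
    have hnd : ¬ (p:ℤ) ∣ (m - 1) := by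
      apply no_dvd_small
      · omega
      · omega
    rw [if_neg hnd]
    split <;> omega
  | succ n ih =>
    intro m h1 h2
    push_cast at h1 h2 ⊢
    by_cases htop : 2*m = (n:ℤ)+1+1
    · rw [Sbin_top p (n+1) m (by push_cast; linarith)]
    by_cases hbot : 2*m = (n:ℤ)+1+1-p
    · rw [Sbin_bot p (n+1) m (by push_cast; linarith)]
    rw [Sbin_pascal]
    have g1 : 0 ≤ Sbin p n m := ih m (by omega) (by omega)
    have g2 : 0 ≤ Sbin p n (m-1) := ih (m-1) (by omega) (by omega)
    omega

lemma Sbin_pos (p : ℕ) (hp : 3 ≤ p) :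
    ∀ n : ℕ, ∀ m : ℤ, 0 ≤ m → (n:ℤ)+1-p < 2*m → 2*m ≤ (n:ℤ) → 0 < Sbin p n m := by
  intro n
  induction n with
  | zero =>
    intro m hm h1 h2
    simp only [Nat.cast_zero] at h1 h2
    have hm0 : m = 0 := by omega
    subst hm0
    unfold Sbin
    rw [Abin_zero, Abin_zero]
    rw [if_pos (dvd_zero _)]
    rw [if_neg (no_dvd_small p _ (by omega) (by omega))]
    omega
  | succ n ih =>
    intro m hm h1 h2
    push_cast at h1 h2
    rw [Sbin_pascal]
    by_cases hcase : 2*m ≤ (n:ℤ)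
    · have g1 : 0 < Sbin p n m := ih m hm (by omega) hcase
      have g2 : 0 ≤ Sbin p n (m-1) := Sbin_nonneg p (by omega) n (m-1) (by omega) (by omega)
      omega
    · have he : 2*m = (n:ℤ)+1 := by omega
      have hm1 : 1 ≤ m := by omega
      have g1 : 0 < Sbin p n (m-1) := ih (m-1) (by omega) (by omega) (by omega)
      have g2 : 0 ≤ Sbin p n m := Sbin_nonneg p (by omega) n m (by omega) (by omega)
      omega

/-- for an odd prime `p` and `n − (p−1) < 2k ≤ n`, the alternating sum
`Σ_{j ∈ ℤ} [C(n, pj + k) − C(n, pj + k − 1)]` is strictly positive. -/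
theorem binom_alt_sum_pos (p n k : ℕ) (hp : p.Prime) (hodd : Odd p)
    (h1 : (n : ℤ) - ((p : ℤ) - 1) < 2 * (k : ℤ)) (h2 : 2 * k ≤ n) :
    0 < ∑' j : ℤ, (binZ n ((p : ℤ) * j + k) - binZ n ((p : ℤ) * j + k - 1)) := by
  have hp3 : 3 ≤ p := by
    have h2p := hp.two_le
    rcases Nat.lt_or_ge p 3 with h | h
    · interval_cases p
      · exact absurd hodd (by decide)
    · exact h
  have hkn : (k:ℤ) ≤ n := by exact_mod_cast (by omega : k ≤ n)
  set s : Finset ℤ := Finset.Icc (-(n:ℤ)-1) ((n:ℤ)+1) with hs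
  have hvan : ∀ j : ℤ, j ∉ s →
      binZ n ((p:ℤ)*j+k) - binZ n ((p:ℤ)*j+k-1) = 0 := by
    intro j hj
    rw [hs, Finset.mem_Icc] at hj
    push_neg at hj
    rcases le_or_gt j (-(n:ℤ)-2) with hjl | hjr
    · have hpj : (p:ℤ)*j ≤ 3*j := by nlinarith [hjl]
      have e1 : binZ n ((p:ℤ)*j+k) = 0 := binZ_neg (by nlinarith)
      have e2 : binZ n ((p:ℤ)*j+k-1) = 0 := binZ_neg (by nlinarith)
      rw [e1, e2, sub_self]
    · have hjbig : (n:ℤ)+2 ≤ j := by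
        have := hj (by omega); omega
      have hpj : 3*j ≤ (p:ℤ)*j := by nlinarith
      have e1 : binZ n ((p:ℤ)*j+k) = 0 := binZ_gt (by nlinarith)
      have e2 : binZ n ((p:ℤ)*j+k-1) = 0 := binZ_gt (by nlinarith)
      rw [e1, e2, sub_self]
  rw [tsum_eq_sum hvan]
  rw [Finset.sum_sub_distrib]
  have hmem : ∀ m : ℤ, -1 ≤ m → m ≤ (k:ℤ) → ∀ j : ℤ, 0 ≤ (p:ℤ)*j+m → (p:ℤ)*j+m ≤ n → j ∈ s := by
    intro m hm0 hmk j hj0 hjn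
    rw [hs, Finset.mem_Icc]
    constructor
    · by_contra h
      push_neg at h
      have hj : j ≤ -(n:ℤ)-2 := by omega
      have : (p:ℤ)*j ≤ 1*j := by
        apply mul_le_mul_of_nonpos_right (by exact_mod_cast hp.one_lt.le) (by omega)
      nlinarith
    · by_contra h
      push_neg at h
      have hj : (n:ℤ)+2 ≤ j := by omega
      have : 1*j ≤ (p:ℤ)*j := by
        apply mul_le_mul_of_nonneg_right (by exact_mod_cast hp.one_lt.le) (by omega)
      nlinarith
  have e1 : ∑ j ∈ s, binZ n ((p:ℤ)*j+(k:ℤ)) = Abin p n k :=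
    sum_binZ_eq p n hp.pos (k:ℤ) s (hmem k (by omega) le_rfl)
  have e2 : ∑ j ∈ s, binZ n ((p:ℤ)*j+((k:ℤ)-1)) = Abin p n ((k:ℤ)-1) :=
    sum_binZ_eq p n hp.pos ((k:ℤ)-1) s (hmem ((k:ℤ)-1) (by omega) (by omega))
  have e2' : ∑ j ∈ s, binZ n ((p:ℤ)*j+(k:ℤ)-1) = Abin p n ((k:ℤ)-1) := by
    rw [← e2]
    exact Finset.sum_congr rfl fun j _ => by rw [add_sub_assoc]
  rw [e1, e2']
  have h2' : 2*(k:ℤ) ≤ (n:ℤ) := by exact_mod_cast h2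
  have hpos := Sbin_pos p hp3 n (k:ℤ) (by positivity) (by linarith) h2'
  simpa [Sbin] using hpos
end

section
/- Let ω be a k-subset of {1,...,n} with 2k ≤ n and threshold h > 0 (i.e. h = max{i : |ω ∩ {1,...,2i−1}| = i} > 0). Then there is a permutation σ of {1,...,n} stabilizing ω (setwise) such that the tableau t^ω σ is (k−h)-standard, i.e. its first k−h columns are strictly increasing downward. -/
/-!
Take `σ` to be the rotation of `ω` by `h = threshold n ω` places: it sends the `p`-th smallest
element of `ω` to the `(p + h)`-th one and fixes everything else. If the `(j + h)`-th element `m`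
of `ω` were smaller than the `j`-th element of the complement, then `{1, …, m}` would contain
`j + h + 1` elements of `ω` and at most `j` other ones, so the density at `i₀ = ⌊m/2⌋ + 1` would
be at least `i₀`, while `i₀ ≤ h` is impossible because `d^ω_h = h`. The density is monotone and
bounded by `k ≤ n/2`, so it would have a fixed point `i ≥ i₀ > h`, against the maximality of `h`.
-/

open Finset hiding dens dens_mono

theorem Monotone.exists_isFixedPt_ge {f : ℕ → ℕ} (hf : Monotone f) {N : ℕ} (hN : ∀ i, f i ≤ N)
    {i : ℕ} (hi : i ≤ f i) : ∃ j, i ≤ j ∧ Function.IsFixedPt f j := by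
  induction hd : N - i generalizing i with
  | zero => exact ⟨i, le_rfl, le_antisymm ((hN i).trans (by omega)) hi⟩
  | succ d ih =>
    by_cases hnext : i + 1 ≤ f (i + 1)
    · obtain ⟨j, hij, hj⟩ := ih hnext (by omega)
      exact ⟨j, by omega, hj⟩
    · exact ⟨i, le_rfl, le_antisymm ((hf (by omega : i ≤ i + 1)).trans (by omega)) hi⟩

namespace Finset
variable {α : Type*} [LinearOrder α]

theorem card_filter_lt_orderEmbOfFin (s : Finset α) {k : ℕ} (h : #s = k) (i : Fin k) :
    #{x ∈ s | x < s.orderEmbOfFin h i} = i := by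
  rw [← Fin.card_Iio i, ← card_map (s.orderEmbOfFin h).toEmbedding]
  congr 1
  ext x
  simp only [mem_filter, mem_map, mem_Iio, RelEmbedding.coe_toEmbedding]
  constructor
  · rintro ⟨hx, hlt⟩
    obtain ⟨j, rfl⟩ : x ∈ Set.range (s.orderEmbOfFin h) := by rwa [range_orderEmbOfFin]
    exact ⟨j, by simpa using hlt, rfl⟩
  · rintro ⟨j, hj, rfl⟩
    simpa using hj

theorem card_filter_lt_sort_getElem (s : Finset α) {p : ℕ} (hp : p < #s) :
    #{x ∈ s | x < (s.sort (· ≤ ·))[p]'(by rwa [length_sort])} = p :=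
  card_filter_lt_orderEmbOfFin s rfl ⟨p, hp⟩

theorem card_filter_le_sort_getElem (s : Finset α) {p : ℕ} (hp : p < #s) :
    #{x ∈ s | x ≤ (s.sort (· ≤ ·))[p]'(by rwa [length_sort])} = p + 1 := by
  set a := (s.sort (· ≤ ·))[p]'(by rwa [length_sort])
  have ha : a ∈ s := (mem_sort _).1 (List.getElem_mem _)
  have hsplit : {x ∈ s | x ≤ a} = insert a {x ∈ s | x < a} := by
    ext x; simp only [mem_filter, mem_insert, le_iff_lt_or_eq]; grind
  rw [hsplit, card_insert_of_notMem (by simp), card_filter_lt_sort_getElem s hp]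

def rotatePerm (s : Finset α) (h : ℕ) : Equiv.Perm α := (s.sort (· ≤ ·)).formPerm ^ h

theorem rotatePerm_apply_of_notMem (s : Finset α) (h : ℕ) {x : α} (hx : x ∉ s) :
    s.rotatePerm h x = x :=
  Equiv.Perm.pow_apply_eq_self_of_apply_eq_self
    (List.formPerm_apply_of_notMem (by rwa [mem_sort])) h

theorem image_rotatePerm (s : Finset α) (h : ℕ) : s.image (s.rotatePerm h) = s := by
  classical
  simpa [map_eq_image] using
    map_perm fun x hx => by_contra fun hxs => hx (s.rotatePerm_apply_of_notMem h hxs)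

theorem rotatePerm_apply_sort_getElem (s : Finset α) (h : ℕ) {j : ℕ} (hj : j + h < #s) :
    s.rotatePerm h ((s.sort (· ≤ ·))[j]'(by rw [length_sort]; omega))
      = (s.sort (· ≤ ·))[j + h]'(by rwa [length_sort]) := by
  simp only [rotatePerm, List.formPerm_pow_apply_getElem _ (sort_nodup _ _), length_sort,
    Nat.mod_eq_of_lt hj]

end Finset

theorem dens_mono_s17 (ω : Finset ℕ) : Monotone (dens ω) := fun _ _ hij =>
  card_le_card (inter_subset_inter le_rfl (Icc_subset_Icc le_rfl (by omega)))

theorem dens_le_card (ω : Finset ℕ) (i : ℕ) : dens ω i ≤ #ω :=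
  card_le_card inter_subset_left

theorem dens_threshold (n : ℕ) (ω : Finset ℕ) : dens ω (threshold n ω) = threshold n ω := by
  rcases ((Icc 1 (n / 2 + 1)).filter fun i => dens ω i = i).eq_empty_or_nonempty with h | h
  · rw [threshold, h, sup_empty]
    simp [dens]
  · obtain ⟨i, hi, hsup⟩ := exists_mem_eq_sup _ h id
    rw [threshold, hsup]
    exact (mem_filter.1 hi).2

theorem le_threshold {n : ℕ} {ω : Finset ℕ} {i : ℕ} (hi : i ∈ Icc 1 (n / 2 + 1))
    (hfix : dens ω i = i) : i ≤ threshold n ω :=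
  le_sup (f := id) (mem_filter.2 ⟨hi, hfix⟩)

theorem dens_lt_of_threshold_lt {n : ℕ} {ω : Finset ℕ} (hω : #ω ≤ n / 2 + 1) {i : ℕ}
    (hi : threshold n ω < i) : dens ω i < i := by
  by_contra! hle
  obtain ⟨j, hij, hj⟩ := (dens_mono_s17 ω).exists_isFixedPt_ge (dens_le_card ω) hle
  have hjk : j ≤ #ω := hj ▸ dens_le_card ω j
  have := le_threshold (n := n) (mem_Icc.2 ⟨by omega, by omega⟩) hj
  omega

theorem add_one_le_dens {ω : Finset ℕ} (h0 : 0 ∉ ω) {p i : ℕ} (hp : p < #ω)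
    (hi : (ω.sort (· ≤ ·))[p]'(by rwa [length_sort]) ≤ 2 * i - 1) : p + 1 ≤ dens ω i := by
  rw [← ω.card_filter_le_sort_getElem hp]
  refine card_le_card fun x hx => ?_
  obtain ⟨hxω, hxle⟩ := mem_filter.1 hx
  have : x ≠ 0 := fun h => h0 (h ▸ hxω)
  exact mem_inter.2 ⟨hxω, mem_Icc.2 ⟨by omega, hxle.trans hi⟩⟩

theorem sort_getElem_le_of_lt_sort_sdiff {n : ℕ} {s : Finset ℕ} (hs : s ⊆ Icc 1 n) {p q : ℕ}
    (hp : p < #s) (hq : q < #(Icc 1 n \ s))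
    (hlt : (s.sort (· ≤ ·))[p]'(by rwa [length_sort])
      < ((Icc 1 n \ s).sort (· ≤ ·))[q]'(by rwa [length_sort])) :
    (s.sort (· ≤ ·))[p]'(by rwa [length_sort]) ≤ p + q + 1 := by
  set a := (s.sort (· ≤ ·))[p]'(by rwa [length_sort])
  set b := ((Icc 1 n \ s).sort (· ≤ ·))[q]'(by rwa [length_sort])
  have han : a ≤ n := (mem_Icc.1 (hs ((mem_sort _).1 (List.getElem_mem _)))).2
  have hcover : Icc 1 a ⊆ {x ∈ s | x ≤ a} ∪ {x ∈ Icc 1 n \ s | x < b} := by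
    intro x hx
    rw [mem_Icc] at hx
    by_cases hxs : x ∈ s
    · exact mem_union_left _ (mem_filter.2 ⟨hxs, hx.2⟩)
    · have hxn : x ∈ Icc 1 n \ s := mem_sdiff.2 ⟨mem_Icc.2 ⟨hx.1, by omega⟩, hxs⟩
      exact mem_union_right _ (mem_filter.2 ⟨hxn, by omega⟩)
  calc a = #(Icc 1 a) := (Nat.card_Icc 1 a).symm
    _ ≤ #{x ∈ s | x ≤ a} + #{x ∈ Icc 1 n \ s | x < b} :=
        (card_le_card hcover).trans (card_union_le _ _)
    _ = p + q + 1 := by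
        rw [s.card_filter_le_sort_getElem hp, (Icc 1 n \ s).card_filter_lt_sort_getElem hq,
          add_right_comm]

theorem sort_sdiff_getElem_lt_sort_getElem_add_threshold {n : ℕ} {ω : Finset ℕ}
    (hω : ω ⊆ Icc 1 n) (hk : #ω ≤ n / 2 + 1) {j : ℕ} (hj : j + threshold n ω < #ω)
    (hjC : j < #(Icc 1 n \ ω)) :
    ((Icc 1 n \ ω).sort (· ≤ ·))[j]'(by rwa [length_sort])
      < (ω.sort (· ≤ ·))[j + threshold n ω]'(by rwa [length_sort]) := by
  set H := threshold n ω
  set m := (ω.sort (· ≤ ·))[j + H]'(by rwa [length_sort])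
  set b := ((Icc 1 n \ ω).sort (· ≤ ·))[j]'(by rwa [length_sort])
  have hmω : m ∈ ω := (mem_sort _).1 (List.getElem_mem _)
  have hbω : b ∉ ω := (mem_sdiff.1 ((mem_sort _).1 (List.getElem_mem _))).2
  by_contra! hle
  have hm : m ≤ j + H + j + 1 :=
    sort_getElem_le_of_lt_sort_sdiff hω hj hjC (hle.lt_of_ne fun h => hbω (h ▸ hmω))
  have hdens : j + H + 1 ≤ dens ω (m / 2 + 1) :=
    add_one_le_dens (fun h0 => by simpa using hω h0) hj (by omega)
  rcases le_or_gt (m / 2 + 1) H with hsmall | hlarge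
  · have := (dens_mono_s17 ω hsmall).trans_eq (dens_threshold n ω)
    omega
  · have := dens_lt_of_threshold_lt hk hlarge
    omega

theorem exists_perm_partial_standard_general (n k : ℕ) (h2k : 2 * k ≤ n) (ω : Finset ℕ)
    (hω : ω ⊆ Finset.Icc 1 n) (hcard : ω.card = k) :
    ∃ σ : Equiv.Perm ℕ, (∀ x ∉ Finset.Icc 1 n, σ x = x) ∧ ω.image σ = ω ∧
      ∀ j < k - threshold n ω,
        σ (((Finset.Icc 1 n \ ω).sort (· ≤ ·)).getD j 0)
          < σ ((ω.sort (· ≤ ·)).getD j 0) := by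
  refine ⟨ω.rotatePerm (threshold n ω),
    fun x hx => ω.rotatePerm_apply_of_notMem _ fun h => hx (hω h), ω.image_rotatePerm _,
    fun j hj => ?_⟩
  have hC : #(Icc 1 n \ ω) = n - k := by
    rw [card_sdiff_of_subset hω, Nat.card_Icc, hcard]; omega
  have hjC : j < #(Icc 1 n \ ω) := by omega
  rw [List.getD_eq_getElem _ _ (by rwa [length_sort]),
    List.getD_eq_getElem _ _ (by rw [length_sort]; omega),
    ω.rotatePerm_apply_of_notMem _ (mem_sdiff.1 ((mem_sort _).1 (List.getElem_mem _))).2,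
    ω.rotatePerm_apply_sort_getElem _ (by omega)]
  exact sort_sdiff_getElem_lt_sort_getElem_add_threshold hω (by omega) (by omega) hjC

/-- if `ω` is a `k`-subset of `{1,...,n}` with `2k ≤ n` and threshold
`h > 0`, then there is a permutation `σ` of `{1,...,n}` stabilizing `ω` setwise such
that the tableau `t^ω σ` is `(k−h)`-standard: its first `k−h` columns are strictly
increasing downward, i.e. `σ(t^ω_{1,j}) < σ(t^ω_{2,j})` for all `j ≤ k−h`. -/
theorem exists_perm_partial_standard (n k : ℕ) (h2k : 2 * k ≤ n) (ω : Finset ℕ)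
    (hω : ω ⊆ Finset.Icc 1 n) (hcard : ω.card = k) (hpos : 0 < threshold n ω) :
    ∃ σ : Equiv.Perm ℕ, (∀ x ∉ Finset.Icc 1 n, σ x = x) ∧ ω.image σ = ω ∧
      ∀ j < k - threshold n ω,
        σ (((Finset.Icc 1 n \ ω).sort (· ≤ ·)).getD j 0)
          < σ ((ω.sort (· ≤ ·)).getD j 0) :=
  exists_perm_partial_standard_general n k h2k ω hω hcard
end
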